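/- Abstract L⁰/L¹ equivalence: Let A be a nonempty set of admissible controls (measurable functions [0,T] → [-1,1]), let J₀(u) = μ(supp u) and J₁(u) = ∫₀ᵀ |u| dt. Suppose a minimizer of J₁ over A exists and that every minimizer of J₁ over A takes values in {-1,0,1} a.e. Then the set of minimizers of J₀ over A equals the set of minimizers of J₁ over A. -/

import Mathlib

/-!
Pointwise, `|u| ≤ 1` gives `|u| ≤ 𝟙_{supp u}`, so `J₁ ≤ J₀` on all admissible controls, with equality
for controls with values in `{-1, 0, 1}`, in particular for every `J₁`-minimizer. Hence a `J₁`-minimizer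
`u₁` satisfies `J₀ u₁ = J₁ u₁ ≤ J₁ ≤ J₀` on `A`, so the two minimal values agree, and a control is a
minimizer of one functional iff it is a minimizer of the other.
-/

open MeasureTheory Set

theorem minimizers_eq_of_le_of_eq_on_minimizers {α β : Type*} [Preorder β] {A : Set α}
    {f g : α → β} (hle : ∀ a ∈ A, g a ≤ f a)
    (heq : ∀ a ∈ A, (∀ b ∈ A, g a ≤ g b) → f a = g a)
    (hex : ∃ a ∈ A, ∀ b ∈ A, g a ≤ g b) :
    {a ∈ A | ∀ b ∈ A, f a ≤ f b} = {a ∈ A | ∀ b ∈ A, g a ≤ g b} := by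
  obtain ⟨a₀, ha₀, hmin₀⟩ := hex
  ext a
  refine and_congr_right fun ha => ⟨fun hmin b hb => ?_, fun hmin b hb => ?_⟩
  · calc g a ≤ f a := hle a ha
      _ ≤ f a₀ := hmin a₀ ha₀
      _ = g a₀ := heq a₀ ha₀ hmin₀
      _ ≤ g b := hmin₀ b hb
  · calc f a = g a := heq a ha hmin
      _ ≤ g b := hmin b hb
      _ ≤ f b := hle b hb

section Support

variable {α : Type*} {f : α → ℝ}

theorem abs_le_indicator_support_one {x : α} (hx : |f x| ≤ 1) :
    |f x| ≤ (Function.support f).indicator 1 x := by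
  by_cases h : f x = 0 <;> simp [h, hx]

theorem abs_eq_indicator_support_one {x : α} (hx : f x ∈ ({-1, 0, 1} : Set ℝ)) :
    |f x| = (Function.support f).indicator 1 x := by
  rcases hx with h | h | h <;> simp_all

theorem integral_abs_le_measureReal_support [MeasurableSpace α] {μ : Measure α} [IsFiniteMeasure μ]
    (hf : Measurable f) (hbd : ∀ᵐ x ∂μ, |f x| ≤ 1) : ∫ x, |f x| ∂μ ≤ μ.real (Function.support f) := by
  have hs := measurableSet_support hf
  rw [← integral_indicator_one hs]
  refine integral_mono_of_nonneg (.of_forall fun x => abs_nonneg (f x)) ?_ ?_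
  · exact (integrable_indicator_iff hs).2 (integrable_const 1).integrableOn
  · filter_upwards [hbd] with x hx using abs_le_indicator_support_one hx

theorem integral_abs_eq_measureReal_support [MeasurableSpace α] {μ : Measure α}
    (hf : Measurable f) (hval : ∀ᵐ x ∂μ, f x ∈ ({-1, 0, 1} : Set ℝ)) :
    ∫ x, |f x| ∂μ = μ.real (Function.support f) := by
  rw [← integral_indicator_one (measurableSet_support hf)]
  exact integral_congr_ae (by filter_upwards [hval] with x hx using abs_eq_indicator_support_one hx)

end Support

theorem l0_l1_equivalence_general (T : ℝ) (A : Set (ℝ → ℝ))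
    (hmeas : ∀ u ∈ A, Measurable u)
    (hbd : ∀ u ∈ A, ∀ᵐ t ∂(volume.restrict (Icc (0:ℝ) T)), |u t| ≤ 1)
    (J0 J1 : (ℝ → ℝ) → ℝ)
    (hJ0 : ∀ u, J0 u = (volume {t ∈ Icc (0:ℝ) T | u t ≠ 0}).toReal)
    (hJ1 : ∀ u, J1 u = ∫ t in Icc (0:ℝ) T, |u t|)
    (hex : ∃ u₁ ∈ A, ∀ u ∈ A, J1 u₁ ≤ J1 u)
    (hbang : ∀ u ∈ A, (∀ v ∈ A, J1 u ≤ J1 v) →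
      ∀ᵐ t ∂(volume.restrict (Icc (0:ℝ) T)), u t ∈ ({-1, 0, 1} : Set ℝ)) :
    {u ∈ A | ∀ v ∈ A, J0 u ≤ J0 v} = {u ∈ A | ∀ v ∈ A, J1 u ≤ J1 v} := by
  have hJ0_support (u : ℝ → ℝ) :
      J0 u = (volume.restrict (Icc (0:ℝ) T)).real (Function.support u) := by
    rw [hJ0, measureReal_restrict_apply' measurableSet_Icc, measureReal_def]
    congr 2
    ext t
    simp [and_comm]
  refine minimizers_eq_of_le_of_eq_on_minimizers (fun u hu => ?_) (fun u hu hmin => ?_) hex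
  · rw [hJ0_support, hJ1]
    exact integral_abs_le_measureReal_support (hmeas u hu) (hbd u hu)
  · rw [hJ0_support, hJ1]
    exact (integral_abs_eq_measureReal_support (hmeas u hu) (hbang u hu hmin)).symm

/-- Abstract L⁰/L¹ equivalence: if a J₁ minimizer exists over the admissible set A and every
J₁ minimizer is bang-off-bang a.e., then the sets of J₀ and J₁ minimizers coincide. -/
theorem l0_l1_equivalence (T : ℝ) (hT : 0 < T) (A : Set (ℝ → ℝ)) (hAne : A.Nonempty)
    (hmeas : ∀ u ∈ A, Measurable u)
    (hbd : ∀ u ∈ A, ∀ᵐ t ∂(volume.restrict (Icc (0:ℝ) T)), |u t| ≤ 1)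
    (J0 J1 : (ℝ → ℝ) → ℝ)
    (hJ0 : ∀ u, J0 u = (volume {t ∈ Icc (0:ℝ) T | u t ≠ 0}).toReal)
    (hJ1 : ∀ u, J1 u = ∫ t in Icc (0:ℝ) T, |u t|)
    (hex : ∃ u₁ ∈ A, ∀ u ∈ A, J1 u₁ ≤ J1 u)
    (hbang : ∀ u ∈ A, (∀ v ∈ A, J1 u ≤ J1 v) →
      ∀ᵐ t ∂(volume.restrict (Icc (0:ℝ) T)), u t ∈ ({-1, 0, 1} : Set ℝ)) :
    {u ∈ A | ∀ v ∈ A, J0 u ≤ J0 v} = {u ∈ A | ∀ v ∈ A, J1 u ≤ J1 v} :=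
  l0_l1_equivalence_general T A hmeas hbd J0 J1 hJ0 hJ1 hex hbang
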